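/- arXiv:1410.1294 — 5 statements merged into one kernel-verified Lean document; each statement's English description precedes it below -/
import Mathlib

section
/- Let X be a complex Banach space, let T ∈ B(X) be power-bounded with M := sup_{n≥0} ‖Tⁿ‖ < ∞, let a ∈ ℓ¹(ℕ), and let λ ∈ 𝕋. Then (1/N)·‖∑_{n=0}^{N-1} conj(λ)ⁿ Tⁿ (â(T) − â(λ)·I)‖ → 0 as N → ∞, where the norm is the operator norm on B(X). (This is the ℤ₊-instance, with Følner sets the intervals {0,…,N−1}, of Lemma 3.3 of the paper.) -/
/-!
Put `S := conj(λ) • T`, which is power-bounded by the same constant, and `b m := a m * λ ^ m`,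
which is again in `ℓ¹`. Since `λ conj(λ) = 1` we have `Tᵐ = λᵐ Sᵐ`, so the averaged operators are
`(1/N) ∑_{n<N} Sⁿ ∑ₘ b m (Sᵐ - I) = (1/N) ∑ₘ b m ∑_{n<N} (Sᵐ⁺ⁿ - Sⁿ)`. The inner sum telescopes to a
sum of `min m N` differences, so the `m`-th term is at most `2 M ‖b m‖ min(m, N) / N`, and these
bounds tend to `0` by dominated convergence.
-/

open Filter Topology Finset

theorem Finset.sum_range_shift_sub {G : Type*} [AddCommGroup G] (f : ℕ → G) (m N : ℕ) :
    ∑ n ∈ range N, (f (m + n) - f n) = ∑ k ∈ range m, (f (N + k) - f k) := by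
  have h := (sum_range_add f N m).symm.trans (add_comm N m ▸ sum_range_add f m N)
  rw [sum_sub_distrib, sum_sub_distrib, sub_eq_sub_iff_add_eq_add, add_comm, ← h, add_comm]

theorem norm_sum_range_shift_sub_le {E : Type*} [SeminormedAddCommGroup E] {f : ℕ → E} {C : ℝ}
    (hf : ∀ k, ‖f k‖ ≤ C) (m N : ℕ) :
    ‖∑ n ∈ range N, (f (m + n) - f n)‖ ≤ 2 * C * min (m : ℝ) N := by
  have key : ∀ (K : ℕ) (g : ℕ → ℕ), ‖∑ k ∈ range K, (f (g k) - f k)‖ ≤ 2 * C * K := fun K g => by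
    refine (norm_sum_le_of_le _ fun k _ => (norm_sub_le _ _).trans (add_le_add (hf (g k)) (hf k))).trans ?_
    rw [sum_const, card_range, nsmul_eq_mul]
    linarith
  rcases le_total m N with h | h
  · rw [min_eq_left (by exact_mod_cast h), sum_range_shift_sub]
    exact key m _
  · rw [min_eq_right (by exact_mod_cast h)]
    exact key N _

theorem tendsto_tsum_mul_min_div_atTop_zero {c : ℕ → ℝ} (hc : Summable c) :
    Tendsto (fun N : ℕ => ∑' m, c m * (min (m : ℝ) N / N)) atTop (𝓝 0) := by
  rw [← tsum_zero]
  refine tendsto_tsum_of_dominated_convergence hc.abs (fun m => ?_) ?_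
  · have h : Tendsto (fun N : ℕ => c m * m * (1 / (N : ℝ))) atTop (𝓝 (c m * m * 0)) :=
      tendsto_one_div_atTop_nhds_zero_nat.const_mul _
    rw [mul_zero] at h
    refine h.congr' ?_
    filter_upwards [eventually_ge_atTop m] with N hN
    rw [min_eq_left (by exact_mod_cast hN)]
    ring
  · refine Eventually.of_forall fun N m => ?_
    rw [norm_mul, Real.norm_eq_abs]
    refine mul_le_of_le_one_right (abs_nonneg _) ?_
    rw [Real.norm_eq_abs, abs_of_nonneg (by positivity)]
    exact div_le_one_of_le₀ (min_le_right _ _) (Nat.cast_nonneg N)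

theorem tendsto_cesaro_norm_sum_pow_mul_tsum_smul_pow_sub_one {𝕜 A : Type*} [NormedField 𝕜]
    [NormedRing A] [NormedAlgebra 𝕜 A] [CompleteSpace A] {S : A} {M : ℝ}
    (hS : ∀ n, ‖S ^ n‖ ≤ M) {b : ℕ → 𝕜} (hb : Summable fun m => ‖b m‖) :
    Tendsto (fun N : ℕ => (1 / (N : ℝ)) * ‖∑ n ∈ range N, S ^ n * ∑' m, b m • (S ^ m - 1)‖)
      atTop (𝓝 0) := by
  have hM : 0 ≤ M := (norm_nonneg _).trans (hS 0)
  have hsub : ∀ m, ‖S ^ m - 1‖ ≤ 2 * M := fun m => by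
    have h1 : ‖(1 : A)‖ ≤ M := pow_zero S ▸ hS 0
    linarith [norm_sub_le (S ^ m) 1, hS m]
  have hsum : Summable fun m => b m • (S ^ m - 1) :=
    .of_norm_bounded (hb.mul_right (2 * M)) fun m =>
      norm_smul_le _ _ |>.trans (mul_le_mul_of_nonneg_left (hsub m) (norm_nonneg _))
  have hexpand : ∀ N, ∑ n ∈ range N, S ^ n * ∑' m, b m • (S ^ m - 1) =
      ∑' m, b m • ∑ n ∈ range N, (S ^ (m + n) - S ^ n) := fun N => by
    rw [← sum_mul, ← hsum.tsum_mul_left]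
    refine tsum_congr fun m => ?_
    rw [mul_smul_comm, sum_mul]
    congr 1
    exact sum_congr rfl fun n _ => by rw [mul_sub, ← pow_add, mul_one, add_comm]
  have hbound : ∀ N : ℕ, (1 / (N : ℝ)) * ‖∑ n ∈ range N, S ^ n * ∑' m, b m • (S ^ m - 1)‖ ≤
      2 * M * ∑' m, ‖b m‖ * (min (m : ℝ) N / N) := fun N => by
    have hg : Summable fun m => ‖b m‖ * (2 * M * min (m : ℝ) N) :=
      .of_nonneg_of_le (fun m => by positivity)
        (fun m => mul_le_mul_of_nonneg_left
          (mul_le_mul_of_nonneg_left (min_le_right _ _) (by positivity)) (norm_nonneg _))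
        (hb.mul_right (2 * M * N))
    have hnorm := tsum_of_norm_bounded hg.hasSum fun m =>
      norm_smul_le _ _ |>.trans
        (mul_le_mul_of_nonneg_left (norm_sum_range_shift_sub_le hS m N) (norm_nonneg _))
    calc (1 / (N : ℝ)) * ‖∑ n ∈ range N, S ^ n * ∑' m, b m • (S ^ m - 1)‖
        ≤ (1 / (N : ℝ)) * ∑' m, ‖b m‖ * (2 * M * min (m : ℝ) N) := by
          rw [hexpand]
          exact mul_le_mul_of_nonneg_left hnorm (by positivity)
      _ = 2 * M * ∑' m, ‖b m‖ * (min (m : ℝ) N / N) := by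
          rw [← tsum_mul_left, ← tsum_mul_left]
          exact tsum_congr fun m => by ring
  refine squeeze_zero (fun N => by positivity) hbound ?_
  simpa using (tendsto_tsum_mul_min_div_atTop_zero hb).const_mul (2 * M)

/-- ℤ₊-instance of Lemma 3.3: for a power-bounded operator `T` on a complex Banach
space, `a ∈ ℓ¹(ℕ)` and `λ` on the unit circle, the Cesàro averages
`(1/N)·‖∑_{n<N} conj(λ)ⁿ Tⁿ (â(T) − â(λ)·I)‖` tend to `0`. -/
theorem stmt_0 {X : Type*} [NormedAddCommGroup X] [NormedSpace ℂ X] [CompleteSpace X]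
    (T : X →L[ℂ] X) (M : ℝ) (hM : ∀ n : ℕ, ‖T ^ n‖ ≤ M)
    (a : ℕ → ℂ) (ha : Summable fun n : ℕ => ‖a n‖)
    (lam : ℂ) (hlam : ‖lam‖ = 1) :
    Tendsto (fun N : ℕ =>
        (1 / (N : ℝ)) * ‖∑ n ∈ Finset.range N, (starRingEnd ℂ lam) ^ n •
          (T ^ n * ((∑' m : ℕ, a m • T ^ m) - (∑' m : ℕ, a m * lam ^ m) • (1 : X →L[ℂ] X)))‖)
      atTop (nhds 0) := by
  set S := starRingEnd ℂ lam • T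
  have hconj : lam * starRingEnd ℂ lam = 1 := by
    rw [Complex.mul_conj, Complex.normSq_eq_norm_sq, hlam, one_pow, Complex.ofReal_one]
  have hS : ∀ n, ‖S ^ n‖ ≤ M := fun n => by
    rw [smul_pow, norm_smul, norm_pow, Complex.norm_conj, hlam, one_pow, one_mul]
    exact hM n
  have hb : Summable fun m => ‖a m * lam ^ m‖ := by simpa [hlam] using ha
  have hT : ∀ m, a m • T ^ m = (a m * lam ^ m) • S ^ m := fun m => by
    rw [smul_pow, smul_smul, mul_assoc, ← mul_pow, hconj, one_pow, mul_one]
  have hB : (∑' m, a m • T ^ m) - (∑' m, a m * lam ^ m) • (1 : X →L[ℂ] X) =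
      ∑' m, (a m * lam ^ m) • (S ^ m - 1) := by
    have hsumS : Summable fun m => (a m * lam ^ m) • S ^ m :=
      .of_norm_bounded (hb.mul_right M) fun m =>
        norm_smul_le _ _ |>.trans (mul_le_mul_of_nonneg_left (hS m) (norm_nonneg _))
    have hsum1 : Summable fun m => (a m * lam ^ m) • (1 : X →L[ℂ] X) :=
      (hb.of_norm).smul_const _
    simp only [hT, smul_sub]
    rw [hsumS.tsum_sub hsum1, (hb.of_norm).tsum_smul_const]
  have hpow : ∀ n (B : X →L[ℂ] X), starRingEnd ℂ lam ^ n • (T ^ n * B) = S ^ n * B :=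
    fun n B => by rw [smul_pow, smul_mul_assoc]
  simpa only [hB, hpow] using tendsto_cesaro_norm_sum_pow_mul_tsum_smul_pow_sub_one hS hb
end

section
/- Let X be a complex Banach space, let T ∈ B(X) be power-bounded, let a ∈ ℓ¹(ℕ), and let λ ∈ 𝕋 be such that â(λ) = 0. Then (1/N)·‖∑_{n=0}^{N-1} conj(λ)ⁿ Tⁿ â(T)‖ → 0 as N → ∞ (operator norm). (ℤ₊-instance of Corollary 3.4 of the paper.) -/
/-!
Put `x := conj λ • T` and `b m := a m * λ ^ m`. Then `‖xⁿ‖ = ‖Tⁿ‖`, `â(T) = ∑ b m • xᵐ` and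
`∑ b m = 0`, so the operator in question is `G_N * ∑ b m • xᵐ` with `G_N := ∑_{n<N} xⁿ`.
As `∑ b m = 0`, `xᵐ` may be replaced by `xᵐ - 1`, and `G_N (xᵐ - 1) = (xᴺ - 1) G_m`; for `‖xⁿ‖ ≤ M`
this gives `‖G_N (xᵐ - 1)‖ ≤ 2M² min(m, N)`. Each term is thus `o(N)` and, uniformly in `m`,
`O(N)`, so dominated convergence in `ℓ¹` concludes.
-/

open Filter Topology Finset

section PowerBounded

variable {A : Type*} [NormedRing A] {x : A} {M : ℝ}

lemma norm_geom_sum_le (hx : ∀ n, ‖x ^ n‖ ≤ M) (N : ℕ) :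
    ‖∑ n ∈ range N, x ^ n‖ ≤ N * M :=
  calc ‖∑ n ∈ range N, x ^ n‖ ≤ ∑ n ∈ range N, ‖x ^ n‖ := norm_sum_le _ _
    _ ≤ ∑ _n ∈ range N, M := sum_le_sum fun n _ => hx n
    _ = N * M := by rw [sum_const, card_range, nsmul_eq_mul]

lemma geom_sum_mul_pow_sub_one (x : A) (N m : ℕ) :
    (∑ n ∈ range N, x ^ n) * (x ^ m - 1) = (x ^ N - 1) * ∑ k ∈ range m, x ^ k := by
  rw [← mul_geom_sum, ← mul_assoc, geom_sum_mul]

lemma norm_pow_sub_one_le (hx : ∀ n, ‖x ^ n‖ ≤ M) (n : ℕ) : ‖x ^ n - 1‖ ≤ 2 * M :=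
  calc ‖x ^ n - 1‖ ≤ ‖x ^ n‖ + ‖x ^ 0‖ := by rw [pow_zero]; exact norm_sub_le _ _
    _ ≤ 2 * M := by linarith [hx n, hx 0]

lemma norm_geom_sum_mul_pow_sub_one_le_left (hx : ∀ n, ‖x ^ n‖ ≤ M) (N m : ℕ) :
    ‖(∑ n ∈ range N, x ^ n) * (x ^ m - 1)‖ ≤ 2 * M ^ 2 * m := by
  have hM : 0 ≤ M := (norm_nonneg _).trans (hx 0)
  rw [geom_sum_mul_pow_sub_one]
  calc _ ≤ ‖x ^ N - 1‖ * ‖∑ k ∈ range m, x ^ k‖ := norm_mul_le _ _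
    _ ≤ 2 * M * (m * M) :=
      mul_le_mul (norm_pow_sub_one_le hx N) (norm_geom_sum_le hx m) (norm_nonneg _)
        (by positivity)
    _ = 2 * M ^ 2 * m := by ring

lemma norm_geom_sum_mul_pow_sub_one_le_right (hx : ∀ n, ‖x ^ n‖ ≤ M) (N m : ℕ) :
    ‖(∑ n ∈ range N, x ^ n) * (x ^ m - 1)‖ ≤ 2 * M ^ 2 * N := by
  have hM : 0 ≤ M := (norm_nonneg _).trans (hx 0)
  calc _ ≤ ‖∑ n ∈ range N, x ^ n‖ * ‖x ^ m - 1‖ := norm_mul_le _ _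
    _ ≤ N * M * (2 * M) :=
      mul_le_mul (norm_geom_sum_le hx N) (norm_pow_sub_one_le hx m) (norm_nonneg _)
        (by positivity)
    _ = 2 * M ^ 2 * N := by ring

lemma tendsto_norm_geom_sum_mul_pow_sub_one_div (hx : ∀ n, ‖x ^ n‖ ≤ M) (m : ℕ) :
    Tendsto (fun N : ℕ => ‖(∑ n ∈ range N, x ^ n) * (x ^ m - 1)‖ / N) atTop (𝓝 0) :=
  squeeze_zero (fun N => by positivity)
    (fun N => div_le_div_of_nonneg_right (norm_geom_sum_mul_pow_sub_one_le_left hx N m)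
      N.cast_nonneg)
    (tendsto_const_div_atTop_nhds_zero_nat _)

lemma norm_geom_sum_mul_pow_sub_one_div_le (hx : ∀ n, ‖x ^ n‖ ≤ M) (N m : ℕ) :
    ‖(∑ n ∈ range N, x ^ n) * (x ^ m - 1)‖ / N ≤ 2 * M ^ 2 := by
  rcases N.eq_zero_or_pos with rfl | hN
  · simp only [CharP.cast_eq_zero, div_zero]
    positivity
  · rw [div_le_iff₀ (by exact_mod_cast hN)]
    exact norm_geom_sum_mul_pow_sub_one_le_right hx N m

variable [CompleteSpace A] {𝕜 : Type*} [NormedField 𝕜] [NormedAlgebra 𝕜 A]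

theorem tendsto_norm_geom_sum_mul_tsum_div_of_hasSum_zero (hx : ∀ n, ‖x ^ n‖ ≤ M)
    {b : ℕ → 𝕜} (hb : Summable fun m => ‖b m‖) (hb0 : HasSum b 0) :
    Tendsto (fun N : ℕ => ‖(∑ n ∈ range N, x ^ n) * ∑' m, b m • x ^ m‖ / N)
      atTop (𝓝 0) := by
  have hsub : Summable fun m => b m • (x ^ m - 1) :=
    .of_norm_bounded (hb.mul_right (2 * M)) fun m => by
      rw [norm_smul]
      exact mul_le_mul_of_nonneg_left (norm_pow_sub_one_le hx m) (norm_nonneg _)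
  have hrecenter : ∑' m, b m • x ^ m = ∑' m, b m • (x ^ m - 1) := by
    have := hsub.hasSum.add (hb0.smul_const (1 : A))
    simp only [← smul_add, sub_add_cancel, zero_smul, add_zero] at this
    exact this.tsum_eq
  have hbound (N : ℕ) :
      Summable fun m => ‖b m‖ * ‖(∑ n ∈ range N, x ^ n) * (x ^ m - 1)‖ :=
    .of_nonneg_of_le (fun m => by positivity)
      (fun m => mul_le_mul_of_nonneg_left (norm_geom_sum_mul_pow_sub_one_le_right hx N m)
        (norm_nonneg _))
      (hb.mul_right _)
  have hle (N : ℕ) : ‖(∑ n ∈ range N, x ^ n) * ∑' m, b m • x ^ m‖ / N ≤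
      ∑' m, ‖b m‖ * (‖(∑ n ∈ range N, x ^ n) * (x ^ m - 1)‖ / N) := by
    rw [hrecenter, ← hsub.tsum_mul_left]
    simp only [mul_smul_comm, ← mul_div_assoc]
    rw [tsum_div_const]
    gcongr
    refine (norm_tsum_le_tsum_norm ?_).trans_eq (tsum_congr fun m => norm_smul _ _)
    simpa only [norm_smul] using hbound N
  have hdom : Tendsto (fun N : ℕ =>
      ∑' m, ‖b m‖ * (‖(∑ n ∈ range N, x ^ n) * (x ^ m - 1)‖ / N)) atTop (𝓝 0) := by
    simpa using tendsto_tsum_of_dominated_convergence (hb.mul_right (2 * M ^ 2))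
      (fun m => (tendsto_norm_geom_sum_mul_pow_sub_one_div hx m).const_mul ‖b m‖)
      (.of_forall fun N m => by
        rw [Real.norm_of_nonneg (by positivity)]
        exact mul_le_mul_of_nonneg_left (norm_geom_sum_mul_pow_sub_one_div_le hx N m)
          (norm_nonneg _))
  exact squeeze_zero (fun N => by positivity) hle hdom

end PowerBounded

/-- ℤ₊-instance of Corollary 3.4: if `T` is power-bounded, `a ∈ ℓ¹(ℕ)` and
`λ ∈ 𝕋` with `â(λ) = 0`, then `(1/N)·‖∑_{n<N} conj(λ)ⁿ Tⁿ â(T)‖ → 0`. -/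
theorem stmt_1 {X : Type*} [NormedAddCommGroup X] [NormedSpace ℂ X] [CompleteSpace X]
    (T : X →L[ℂ] X) (hT : ∃ M : ℝ, ∀ n : ℕ, ‖T ^ n‖ ≤ M)
    (a : ℕ → ℂ) (ha : Summable fun n : ℕ => ‖a n‖)
    (lam : ℂ) (hlam : ‖lam‖ = 1) (hzero : (∑' m : ℕ, a m * lam ^ m) = 0) :
    Tendsto (fun N : ℕ =>
        (1 / (N : ℝ)) * ‖∑ n ∈ Finset.range N, (starRingEnd ℂ lam) ^ n •
          (T ^ n * (∑' m : ℕ, a m • T ^ m))‖)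
      atTop (nhds 0) := by
  obtain ⟨M, hM⟩ := hT
  set x := starRingEnd ℂ lam • T
  have hconj : ‖starRingEnd ℂ lam‖ = 1 := by rw [RCLike.norm_conj, hlam]
  have hlam_conj : lam * starRingEnd ℂ lam = 1 := by
    rw [RCLike.mul_conj, hlam]; norm_num
  have hx : ∀ n, ‖x ^ n‖ ≤ M := fun n => by
    rw [smul_pow, norm_smul, norm_pow, hconj, one_pow, one_mul]; exact hM n
  have hb : Summable fun m => ‖a m * lam ^ m‖ := by
    simpa only [norm_mul, norm_pow, hlam, one_pow, mul_one] using ha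
  have hS : ∑' m, a m • T ^ m = ∑' m, (a m * lam ^ m) • x ^ m := by
    refine tsum_congr fun m => ?_
    rw [smul_pow, smul_smul, mul_assoc, ← mul_pow, hlam_conj, one_pow, mul_one]
  have hsum (N : ℕ) :
      ∑ n ∈ range N, (starRingEnd ℂ lam) ^ n • (T ^ n * ∑' m, a m • T ^ m) =
        (∑ n ∈ range N, x ^ n) * ∑' m, (a m * lam ^ m) • x ^ m := by
    rw [hS, Finset.sum_mul]
    simp only [x, smul_pow, smul_mul_assoc]
  simp only [hsum, one_div_mul_eq_div]
  exact tendsto_norm_geom_sum_mul_tsum_div_of_hasSum_zero hx hb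
    (hzero ▸ hb.of_norm.hasSum)
end

section
/- Let X be a complex Hilbert space, let U be a unitary operator on X, and let a ∈ ℓ¹(ℤ). Suppose that for every λ ∈ σ(U) one has (1/N)·‖∑_{n=0}^{N-1} conj(λ)ⁿ Uⁿ â(U)‖ → 0 as N → ∞ (operator norm). Then â(U) = 0. (ℤ-instance of Proposition 3.5 of the paper.) -/
/-!
Since `U` is normal, the continuous functional calculus identifies `â(U)` with `cfc â U`, the
series converging uniformly on `σ(U) ⊆ 𝕋`. For `λ ∈ σ(U)` the operator
`∑_{n<N} conj(λ)ⁿ Uⁿ â(U)` is then `cfc g U` with `g(z) = (∑_{n<N} (conj(λ) z)ⁿ) â(z)`, and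
`g(λ) = N â(λ)`. As the norm of `cfc g U` dominates `|g|` on the spectrum, the hypothesis forces
`â(λ) = 0` on all of `σ(U)`, hence `cfc â U = 0`.
-/

open Filter Topology

section

variable {A : Type*} [CStarAlgebra A]

lemma cfc_tsum {ι : Type*} (f : ι → ℂ → ℂ) (a : A) {bound : ι → ℝ} (h_sum : Summable bound)
    (h_le : ∀ i, ∀ z ∈ spectrum ℂ a, ‖f i z‖ ≤ bound i)
    (hf : ∀ i, ContinuousOn (f i) (spectrum ℂ a)) [ha : IsStarNormal a] :
    cfc (fun z => ∑' i, f i z) a = ∑' i, cfc (f i) a := by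
  let g : ι → C(spectrum ℂ a, ℂ) := fun i => ⟨_, (hf i).domRestrict⟩
  have hg : Summable g := h_sum.abs.of_norm_bounded fun i =>
    (ContinuousMap.norm_le _ (abs_nonneg _)).mpr fun z => (h_le i z z.2).trans (le_abs_self _)
  have hF := continuousOn_tsum hf h_sum h_le
  rw [cfc_eq_cfcL ha hF]
  have : (⟨_, hF.domRestrict⟩ : C(spectrum ℂ a, ℂ)) = ∑' i, g i :=
    ContinuousMap.ext fun z => ContinuousMap.tsum_apply hg z
  rw [this, (cfcL ha).map_tsum hg]
  exact tsum_congr fun i => (cfc_eq_cfcL ha (hf i)).symm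

lemma cfc_zpow_unitary (u : unitary A) (m : ℤ) :
    cfc (fun z : ℂ => z ^ m) (u : A) = ↑(u ^ m) := by
  have h := cfc_zpow (R := ℂ) (Unitary.toUnits u) m
  rwa [← map_zpow, Unitary.val_toUnits_apply, Unitary.val_toUnits_apply] at h

lemma sum_smul_pow_mul_cfc (f : ℂ → ℂ) (a : A) (c : ℂ) (N : ℕ)
    [IsStarNormal a] (hf : ContinuousOn f (spectrum ℂ a)) :
    ∑ n ∈ Finset.range N, c ^ n • (a ^ n * cfc f a) =
      cfc (fun z => (∑ n ∈ Finset.range N, (c * z) ^ n) * f z) a := by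
  have h_geom : (fun z => ∑ n ∈ Finset.range N, (c * z) ^ n) =
      ∑ n ∈ Finset.range N, fun z => c ^ n * z ^ n := by
    ext z
    simp [mul_pow]
  rw [cfc_mul _ f a (by fun_prop) hf, h_geom, cfc_sum _ a _ (fun n _ => by fun_prop),
    Finset.sum_mul]
  refine Finset.sum_congr rfl fun n _ => ?_
  rw [cfc_const_mul _ _ a (by fun_prop), cfc_pow_id a n, smul_mul_assoc]

lemma apply_eq_zero_of_tendsto_cesaro (f : ℂ → ℂ) (a : A) [IsStarNormal a]
    (hf : ContinuousOn f (spectrum ℂ a)) {lam : ℂ} (hlam : lam ∈ spectrum ℂ a) (h_norm : ‖lam‖ = 1)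
    (h : Tendsto (fun N : ℕ => (1 / (N : ℝ)) *
      ‖∑ n ∈ Finset.range N, (starRingEnd ℂ lam) ^ n • (a ^ n * cfc f a)‖) atTop (𝓝 0)) :
    f lam = 0 := by
  have h_lower (N : ℕ) : (N : ℝ) * ‖f lam‖ ≤
      ‖∑ n ∈ Finset.range N, (starRingEnd ℂ lam) ^ n • (a ^ n * cfc f a)‖ := by
    rw [sum_smul_pow_mul_cfc f a _ N hf]
    have := norm_apply_le_norm_cfc
      (fun z => (∑ n ∈ Finset.range N, (starRingEnd ℂ lam * z) ^ n) * f z) a hlam (by fun_prop)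
    simpa [Complex.conj_mul', h_norm] using this
  have h_eventually : ∀ᶠ N : ℕ in atTop, ‖f lam‖ ≤ (1 / (N : ℝ)) *
      ‖∑ n ∈ Finset.range N, (starRingEnd ℂ lam) ^ n • (a ^ n * cfc f a)‖ := by
    filter_upwards [eventually_gt_atTop 0] with N hN
    rw [one_div, ← div_eq_inv_mul, le_div_iff₀ (by positivity), mul_comm]
    exact h_lower N
  exact norm_le_zero_iff.mp (ge_of_tendsto h h_eventually)

variable (u : unitary A) {a : ℤ → ℂ}

lemma norm_eq_one_of_mem_spectrum_unitary {z : ℂ} (hz : z ∈ spectrum ℂ (u : A)) : ‖z‖ = 1 := by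
  simpa using Unitary.spectrum_subset_circle u hz

lemma continuousOn_zpow_spectrum_unitary (m : ℤ) :
    ContinuousOn (fun z : ℂ => z ^ m) (spectrum ℂ (u : A)) :=
  continuousOn_id.zpow₀ m fun z hz =>
    Or.inl (norm_ne_zero_iff.mp (by simp [norm_eq_one_of_mem_spectrum_unitary u hz]))

lemma norm_mul_zpow_of_mem_spectrum_unitary (c : ℂ) (m : ℤ) {z : ℂ}
    (hz : z ∈ spectrum ℂ (u : A)) : ‖c * z ^ m‖ = ‖c‖ := by
  simp [norm_zpow, norm_eq_one_of_mem_spectrum_unitary u hz]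

lemma continuousOn_tsum_zpow_spectrum_unitary (ha : Summable fun m => ‖a m‖) :
    ContinuousOn (fun z : ℂ => ∑' m, a m * z ^ m) (spectrum ℂ (u : A)) :=
  continuousOn_tsum (fun m => continuousOn_const.mul (continuousOn_zpow_spectrum_unitary u m)) ha
    fun m _ hz => (norm_mul_zpow_of_mem_spectrum_unitary u _ m hz).le

lemma cfc_tsum_zpow_unitary (ha : Summable fun m => ‖a m‖) :
    cfc (fun z : ℂ => ∑' m, a m * z ^ m) (u : A) = ∑' m, a m • (↑(u ^ m) : A) := by
  rw [cfc_tsum (fun m z => a m * z ^ m) _ ha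
    (fun m _ hz => (norm_mul_zpow_of_mem_spectrum_unitary u _ m hz).le)
    (fun m => continuousOn_const.mul (continuousOn_zpow_spectrum_unitary u m))]
  refine tsum_congr fun m => ?_
  rw [cfc_const_mul _ _ _ (continuousOn_zpow_spectrum_unitary u m), cfc_zpow_unitary]

end

/-- ℤ-instance of Proposition 3.5: if `U` is a unitary operator on a complex Hilbert
space, `a ∈ ℓ¹(ℤ)`, and for every `λ ∈ σ(U)` the Cesàro averages
`(1/N)·‖∑_{n<N} conj(λ)ⁿ Uⁿ â(U)‖` tend to `0`, then `â(U) = 0`. -/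
theorem stmt_2 {X : Type*} [NormedAddCommGroup X] [InnerProductSpace ℂ X] [CompleteSpace X]
    (U : unitary (X →L[ℂ] X)) (a : ℤ → ℂ) (ha : Summable fun n : ℤ => ‖a n‖)
    (h : ∀ lam ∈ spectrum ℂ (U : X →L[ℂ] X),
      Tendsto (fun N : ℕ =>
          (1 / (N : ℝ)) * ‖∑ n ∈ Finset.range N, (starRingEnd ℂ lam) ^ n •
            ((U : X →L[ℂ] X) ^ n * (∑' m : ℤ, a m • ((U ^ m : unitary (X →L[ℂ] X)) : X →L[ℂ] X)))‖)
        atTop (nhds 0)) :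
    (∑' m : ℤ, a m • ((U ^ m : unitary (X →L[ℂ] X)) : X →L[ℂ] X)) = 0 := by
  rw [← cfc_tsum_zpow_unitary U ha] at h ⊢
  calc cfc (fun z : ℂ => ∑' m, a m * z ^ m) (U : X →L[ℂ] X) = cfc 0 (U : X →L[ℂ] X) :=
        cfc_congr fun lam hlam => apply_eq_zero_of_tendsto_cesaro _ _
          (continuousOn_tsum_zpow_spectrum_unitary U ha) hlam
          (norm_eq_one_of_mem_spectrum_unitary U hlam) (h lam hlam)
    _ = 0 := cfc_zero ℂ _
end

section
/- Let X be a complex Hilbert space, let U be a unitary operator on X, and let Q ∈ B(X) be an operator commuting with U. Suppose that for every λ ∈ σ(U) one has (1/N)·‖∑_{n=0}^{N-1} conj(λ)ⁿ Uⁿ Q‖ → 0 as N → ∞ (operator norm). Then Q = 0. (ℤ-instance of the remark following Proposition 3.5 of the paper.) -/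
/-!
Gelfand theory in the commutative C⋆-algebra generated by `U` and `Q⋆Q`: a character `φ` with
`|φ (Q⋆Q)| = ‖Q⋆Q‖ = ‖Q‖²` gives a spectral value `λ = φ U` of modulus one, and
`B = ∑_{n<N} conj(λ)ⁿ Uⁿ` has `φ B = N`. Since `Q` commutes with `B` and `B⋆`,
`‖B Q‖² = ‖B⋆B Q⋆Q‖ ≥ |φ (B⋆B Q⋆Q)| = N² ‖Q‖²`, so the averages in the hypothesis
stay above `‖Q‖`.
-/

open Filter Topology Polynomial

theorem Commute.aeval_right {R A : Type*} [CommSemiring R] [Semiring A] [Algebra R A]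
    {q u : A} (h : Commute q u) (p : R[X]) : Commute q (aeval u p) := by
  induction p using Polynomial.induction_on' with
  | add p r hp hr => simpa using hp.add_right hr
  | monomial n a =>
    simpa [aeval_monomial] using (Algebra.commute_algebraMap_right a q).mul_right (h.pow_right n)

theorem star_mul_mul_self_of_commute {R : Type*} [Monoid R] [StarMul R] {b q : R}
    (h : Commute q b) (h' : Commute (star q) b) :
    star (b * q) * (b * q) = star b * b * (star q * q) := by
  rw [star_mul, ← mul_assoc, mul_assoc (star q), (h.star_star.mul_right h').eq, mul_assoc]

theorem CommCStarAlgebra.exists_characterSpace_norm_eq {S : Type*} [CommCStarAlgebra S]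
    [Nontrivial S] (a : S) : ∃ φ : WeakDual.characterSpace ℂ S, ‖φ a‖ = ‖a‖ := by
  obtain ⟨z, hz, hza⟩ := spectrum.exists_nnnorm_eq_spectralRadius a
  obtain ⟨φ, rfl⟩ := WeakDual.CharacterSpace.mem_spectrum_iff_exists.mp hz
  refine ⟨φ, ?_⟩
  rw [IsStarNormal.spectralRadius_eq_nnnorm] at hza
  exact congrArg NNReal.toReal (mod_cast hza)

open scoped IsMulCommutative in
open StarAlgebra StarSubalgebra in
theorem exists_mem_spectrum_norm_eval_sq_mul_le {A : Type*} [CStarAlgebra A] [Nontrivial A]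
    {u t : A} [IsStarNormal u] (ht : IsSelfAdjoint t) (htu : Commute t u) :
    ∃ z ∈ spectrum ℂ u, ∀ p : ℂ[X],
      ‖p.eval z‖ ^ 2 * ‖t‖ ≤ ‖star (aeval u p) * aeval u p * t‖ := by
  have htu' : Commute t (star u) := by simpa [ht.star_eq] using htu.star_star
  have : IsMulCommutative (adjoin ℂ {u, t}) :=
    isMulCommutative_adjoin ℂ (by grind [Commute.symm])
      (by grind [star_comm_self', IsSelfAdjoint.star_eq])
  let S : StarSubalgebra ℂ A := (adjoin ℂ {u, t}).topologicalClosure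
  let _ : CommRing S := (adjoin ℂ {u, t}).commRingTopologicalClosure mul_comm
  let _ : CommCStarAlgebra S := { }
  have : IsClosed (S : Set A) := (adjoin ℂ {u, t}).isClosed_topologicalClosure
  let uS : S := ⟨u, le_topologicalClosure _ (subset_adjoin ℂ _ (by simp))⟩
  let tS : S := ⟨t, le_topologicalClosure _ (subset_adjoin ℂ _ (by simp))⟩
  obtain ⟨φ, hφ⟩ := CommCStarAlgebra.exists_characterSpace_norm_eq tS
  refine ⟨φ uS, ?_, fun p => ?_⟩
  · simpa only [S.spectrum_eq] using AlgHom.apply_mem_spectrum φ uS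
  · have hb : ((aeval uS p : S) : A) = aeval u p := (aeval_algHom_apply S.subtype uS p).symm
    have hφb : φ (aeval uS p) = p.eval (φ uS) := by
      rw [← aeval_algHom_apply, coe_aeval_eq_eval]
    calc ‖p.eval (φ uS)‖ ^ 2 * ‖t‖
        = ‖φ (star (aeval uS p) * aeval uS p * tS)‖ := by
          rw [map_mul, map_mul, map_star, hφb, norm_mul, norm_mul, norm_star, ← sq]
          exact congrArg _ hφ.symm
      _ ≤ ‖star (aeval uS p) * aeval uS p * tS‖ :=
          spectrum.norm_le_norm_of_mem (AlgHom.apply_mem_spectrum φ _)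
      _ = ‖star (aeval u p) * aeval u p * t‖ := by rw [← hb]; rfl

theorem exists_mem_spectrum_norm_eval_mul_le {A : Type*} [CStarAlgebra A] [Nontrivial A]
    {u q : A} [IsStarNormal u] (hqu : Commute q u) (hqu' : Commute q (star u)) :
    ∃ z ∈ spectrum ℂ u, ∀ p : ℂ[X], ‖p.eval z‖ * ‖q‖ ≤ ‖aeval u p * q‖ := by
  have hsqu : Commute (star q) u := by simpa using hqu'.star_star
  obtain ⟨z, hz, h⟩ :=
    exists_mem_spectrum_norm_eval_sq_mul_le (IsSelfAdjoint.star_mul_self q) (hsqu.mul_left hqu)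
  refine ⟨z, hz, fun p => ?_⟩
  refine (pow_le_pow_iff_left₀ (by positivity) (norm_nonneg _) two_ne_zero).mp ?_
  calc (‖p.eval z‖ * ‖q‖) ^ 2 = ‖p.eval z‖ ^ 2 * ‖star q * q‖ := by
        rw [CStarRing.norm_star_mul_self]; ring
    _ ≤ ‖star (aeval u p) * aeval u p * (star q * q)‖ := h p
    _ = ‖aeval u p * q‖ ^ 2 := by
        rw [← star_mul_mul_self_of_commute (hqu.aeval_right p) (hsqu.aeval_right p),
          CStarRing.norm_star_mul_self, sq]

/-- ℤ-instance of the remark after Proposition 3.5: if `U` is a unitary operator on a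
complex Hilbert space, `Q ∈ B(X)` commutes with `U`, and for every `λ ∈ σ(U)` the
Cesàro averages `(1/N)·‖∑_{n<N} conj(λ)ⁿ Uⁿ Q‖` tend to `0`, then `Q = 0`. -/
theorem stmt_3 {X : Type*} [NormedAddCommGroup X] [InnerProductSpace ℂ X] [CompleteSpace X]
    (U : unitary (X →L[ℂ] X)) (Q : X →L[ℂ] X)
    (hQ : Q * (U : X →L[ℂ] X) = (U : X →L[ℂ] X) * Q)
    (h : ∀ lam ∈ spectrum ℂ (U : X →L[ℂ] X),
      Tendsto (fun N : ℕ =>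
          (1 / (N : ℝ)) * ‖∑ n ∈ Finset.range N, (starRingEnd ℂ lam) ^ n •
            ((U : X →L[ℂ] X) ^ n * Q)‖)
        atTop (nhds 0)) :
    Q = 0 := by
  rcases subsingleton_or_nontrivial X with hX | hX
  · exact Subsingleton.elim Q 0
  have hQ' : Commute Q (star (U : X →L[ℂ] X)) := by
    simpa [← Unitary.star_eq_inv] using Commute.units_inv_right (u := Unitary.toUnits U) hQ
  obtain ⟨z, hz, hle⟩ := exists_mem_spectrum_norm_eval_mul_le hQ hQ'
  have hz1 : starRingEnd ℂ z * z = 1 := by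
    simp [Complex.conj_mul', mem_sphere_zero_iff_norm.mp (spectrum.subset_circle_of_unitary U.2 hz)]
  have hN (N : ℕ) :
      N * ‖Q‖ ≤ ‖∑ n ∈ Finset.range N, starRingEnd ℂ z ^ n • ((U : X →L[ℂ] X) ^ n * Q)‖ := by
    let p : ℂ[X] := ∑ n ∈ Finset.range N, C (starRingEnd ℂ z ^ n) * Polynomial.X ^ n
    have hp : p.eval z = N := by
      simp only [p, eval_finsetSum, eval_mul, eval_C, eval_pow, eval_X, ← mul_pow, hz1]
      simp
    have hpU : aeval (U : X →L[ℂ] X) p * Q =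
        ∑ n ∈ Finset.range N, starRingEnd ℂ z ^ n • ((U : X →L[ℂ] X) ^ n * Q) := by
      simp only [p, map_sum, map_mul, aeval_C, map_pow, aeval_X, Finset.sum_mul, Algebra.smul_def,
        mul_assoc]
    simpa only [hp, hpU, Complex.norm_natCast] using hle p
  refine norm_le_zero_iff.mp (ge_of_tendsto (h z hz) ?_)
  filter_upwards [eventually_gt_atTop 0] with N hN0
  rw [one_div, le_inv_mul_iff₀ (by positivity)]
  exact hN N
end

section
/- Let X be a complex Banach space, let T ∈ B(X) be power-bounded with M := sup_{n≥0} ‖Tⁿ‖, let a ∈ ℓ¹(ℕ) with ‖a‖₁ := ∑_{n=0}^∞ |a(n)|, and let λ ∈ 𝕋. Then for all natural numbers t, N with 1 ≤ t ≤ N: (1/N)·‖∑_{n=0}^{N-1} conj(λ)ⁿ Tⁿ â(T)‖ ≤ sup{ ‖Tᵐ â(T)‖ : m ≥ t } + M²‖a‖₁·(2t/N). (ℤ₊-instance of the quantitative bound in the remark following Lemma 3.8, proving (iii)⇒(ii) of Theorem 3.1 directly.) -/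
/-! Split the Cesàro sum at `t`: each of the first `t` terms is at most `‖Tⁿ‖‖â(T)‖ ≤ M²‖a‖₁`,
and each later term is at most `sup_{m ≥ t} ‖Tᵐ â(T)‖`; the rotation by `conj(λ)ⁿ` is
unimodular and costs nothing. This already gives the bound with `t/N` in place of `2t/N`. -/

open Finset

theorem norm_tsum_smul_le_of_norm_le {𝕜 E : Type*} [NormedField 𝕜] [SeminormedAddCommGroup E]
    [NormedSpace 𝕜 E] {a : ℕ → 𝕜} (ha : Summable fun n => ‖a n‖) {x : ℕ → E} {M : ℝ}
    (hx : ∀ n, ‖x n‖ ≤ M) : ‖∑' n, a n • x n‖ ≤ (∑' n, ‖a n‖) * M :=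
  tsum_of_norm_bounded (ha.hasSum.mul_right M) fun n => by
    rw [norm_smul]
    exact mul_le_mul_of_nonneg_left (hx n) (norm_nonneg _)

theorem sum_range_div_le_of_tail_le {f : ℕ → ℝ} {C S : ℝ} {t N : ℕ} (hf : ∀ n, 0 ≤ f n)
    (hC : ∀ n, f n ≤ C) (hS : ∀ n, t ≤ n → f n ≤ S) (htN : t ≤ N) :
    (∑ n ∈ range N, f n) / N ≤ S + C * t / N := by
  have hS0 : 0 ≤ S := (hf t).trans (hS t le_rfl)
  have hsplit : ∑ n ∈ range N, f n ≤ t * C + N * S :=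
    calc ∑ n ∈ range N, f n = ∑ n ∈ range t, f n + ∑ n ∈ Ico t N, f n :=
          (sum_range_add_sum_Ico f htN).symm
      _ ≤ t * C + (N - t : ℕ) * S := by
          gcongr
          · simpa using sum_le_card_nsmul (range t) f C fun n _ => hC n
          · simpa using sum_le_card_nsmul (Ico t N) f S fun n hn => hS n (mem_Ico.mp hn).1
      _ ≤ t * C + N * S := by gcongr; exact Nat.sub_le N t
  rcases N.eq_zero_or_pos with rfl | hN
  · simpa using hS0
  · have hN' : (0 : ℝ) < N := by exact_mod_cast hN
    rw [div_le_iff₀ hN', add_mul, div_mul_cancel₀ _ hN'.ne']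
    linarith
theorem stmt_14_general {X : Type*} [NormedAddCommGroup X] [NormedSpace ℂ X]
    (T : X →L[ℂ] X) (M : ℝ) (hM : ∀ n : ℕ, ‖T ^ n‖ ≤ M)
    (a : ℕ → ℂ) (ha : Summable fun n : ℕ => ‖a n‖)
    (lam : ℂ) (hlam : ‖lam‖ = 1) :
    ∀ t N : ℕ, 1 ≤ t → t ≤ N →
      (1 / (N : ℝ)) * ‖∑ n ∈ Finset.range N, (starRingEnd ℂ lam) ^ n •
          (T ^ n * (∑' m : ℕ, a m • T ^ m))‖ ≤
        sSup { r : ℝ | ∃ m : ℕ, t ≤ m ∧ r = ‖T ^ m * (∑' k : ℕ, a k • T ^ k)‖ } +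
          M ^ 2 * (∑' n : ℕ, ‖a n‖) * (2 * (t : ℝ) / (N : ℝ)) := by
  intro t N _ htN
  set A : X →L[ℂ] X := ∑' m : ℕ, a m • T ^ m
  set C := M ^ 2 * ∑' n : ℕ, ‖a n‖
  have hC : ∀ n, ‖T ^ n * A‖ ≤ C := fun n =>
    calc ‖T ^ n * A‖ ≤ ‖T ^ n‖ * ‖A‖ := norm_mul_le _ _
      _ ≤ M * ((∑' n : ℕ, ‖a n‖) * M) :=
          mul_le_mul (hM n) (norm_tsum_smul_le_of_norm_le ha hM) (norm_nonneg _)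
            ((norm_nonneg _).trans (hM 0))
      _ = C := by ring
  have hsup : ∀ m, t ≤ m → ‖T ^ m * A‖ ≤ sSup { r : ℝ | ∃ m : ℕ, t ≤ m ∧ r = ‖T ^ m * A‖ } :=
    fun m hm => le_csSup ⟨C, by rintro r ⟨k, -, rfl⟩; exact hC k⟩ ⟨m, hm, rfl⟩
  have hrotate : ‖∑ n ∈ range N, (starRingEnd ℂ lam) ^ n • (T ^ n * A)‖ ≤
      ∑ n ∈ range N, ‖T ^ n * A‖ :=
    norm_sum_le_of_le _ fun n _ => by
      rw [norm_smul, norm_pow, RCLike.norm_conj, hlam, one_pow, one_mul]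
  calc (1 / (N : ℝ)) * ‖∑ n ∈ range N, (starRingEnd ℂ lam) ^ n • (T ^ n * A)‖
      ≤ (∑ n ∈ range N, ‖T ^ n * A‖) / N := by
        rw [one_div_mul_eq_div]; gcongr
    _ ≤ sSup { r : ℝ | ∃ m : ℕ, t ≤ m ∧ r = ‖T ^ m * A‖ } + C * t / N :=
        sum_range_div_le_of_tail_le (fun _ => norm_nonneg _) hC hsup htN
    _ ≤ sSup { r : ℝ | ∃ m : ℕ, t ≤ m ∧ r = ‖T ^ m * A‖ } + C * (2 * t / N) := by
        have hC0 : 0 ≤ C := (norm_nonneg _).trans (hC 0)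
        rw [mul_div_assoc]
        gcongr
        linarith

/-- ℤ₊-instance of the quantitative bound in the remark after Lemma 3.8: for a
power-bounded operator `T` (with `‖Tⁿ‖ ≤ M`), `a ∈ ℓ¹(ℕ)`, `λ ∈ 𝕋` and `1 ≤ t ≤ N`,
`(1/N)·‖∑_{n<N} conj(λ)ⁿ Tⁿ â(T)‖ ≤ sup_{m≥t} ‖Tᵐ â(T)‖ + M²‖a‖₁·(2t/N)`. -/
theorem stmt_14 {X : Type*} [NormedAddCommGroup X] [NormedSpace ℂ X] [CompleteSpace X]
    (T : X →L[ℂ] X) (M : ℝ) (hM : ∀ n : ℕ, ‖T ^ n‖ ≤ M)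
    (a : ℕ → ℂ) (ha : Summable fun n : ℕ => ‖a n‖)
    (lam : ℂ) (hlam : ‖lam‖ = 1) :
    ∀ t N : ℕ, 1 ≤ t → t ≤ N →
      (1 / (N : ℝ)) * ‖∑ n ∈ Finset.range N, (starRingEnd ℂ lam) ^ n •
          (T ^ n * (∑' m : ℕ, a m • T ^ m))‖ ≤
        sSup { r : ℝ | ∃ m : ℕ, t ≤ m ∧ r = ‖T ^ m * (∑' k : ℕ, a k • T ^ k)‖ } +
          M ^ 2 * (∑' n : ℕ, ‖a n‖) * (2 * (t : ℝ) / (N : ℝ)) :=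
  stmt_14_general T M hM a ha lam hlam
end
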